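/- arXiv:2307.11597 — 2 statements merged into one kernel-verified Lean document; each statement's English description precedes it below -/
import Mathlib

section
/- Let μ be a finite Borel measure on ℝ (playing the role of the spectral measure), and let a ∈ 𝒮(ℝ) with â supported in (-1,1). Then for ε > 0 and λ ∈ ℝ, ∫ a(ε⁻¹(√s - λ)) dμ(s) over s ≥ 0 can be written as (ε/π)∫_{-∞}^{∞} â(εt) e^{-itλ} (∫ cos(t√s) dμ(s)) dt − ∫ a(ε⁻¹(−√s − λ)) dμ(s). -/
/-!
With `â t = 𝓕 a (t / 2π)`, Fourier inversion reads `∫ â(t) e^{itτ} dt = 2π a(τ)`. Writing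
`cos(t√s) = (e^{it√s} + e^{-it√s}) / 2` and substituting `t ↦ εt` turns the `t`-integral, for each
fixed `s`, into `(π/ε) (a(ε⁻¹(√s - λ)) + a(ε⁻¹(-√s - λ)))`. Since `â` is integrable and `cos` is
bounded, Fubini against the finite measure `μ` exchanges the `s`- and `t`-integrals.
-/

open MeasureTheory FourierTransform Complex
open scoped SchwartzMap

theorem integral_exp_neg_I_mul_eq_fourier (f : ℝ → ℂ) (t : ℝ) :
    ∫ τ : ℝ, cexp (-(I * t * τ)) * f τ = 𝓕 f (t / (2 * Real.pi)) := by
  rw [Real.fourier_real_eq_integral_exp_smul]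
  congr 1 with τ
  rw [smul_eq_mul]
  congr 2
  push_cast
  field_simp

theorem SchwartzMap.integral_exp_I_mul_fourier_div (f : 𝓢(ℝ, ℂ)) (τ : ℝ) :
    ∫ t : ℝ, cexp (I * t * τ) * 𝓕 (f : ℝ → ℂ) (t / (2 * Real.pi)) = 2 * Real.pi * f τ := by
  have hinv : 𝓕⁻ (𝓕 (f : ℝ → ℂ)) τ = f τ := by
    rw [← SchwartzMap.fourier_coe, ← SchwartzMap.fourierInv_coe, fourierInv_fourier_eq]
  have h2π : (2 * Real.pi : ℂ) = (|2 * Real.pi| : ℝ) := by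
    rw [abs_of_pos Real.two_pi_pos]
    push_cast
    ring
  rw [← hinv, Real.fourierInv_eq_fourier_neg, Real.fourier_real_eq_integral_exp_smul, h2π,
    ← real_smul, ← Measure.integral_comp_div]
  congr 1 with t
  rw [smul_eq_mul]
  congr 2
  push_cast
  field_simp

theorem SchwartzMap.integrable_comp {V E α : Type*} [NormedAddCommGroup V] [NormedSpace ℝ V]
    [NormedAddCommGroup E] [NormedSpace ℝ E] [MeasurableSpace α] {ν : Measure α}
    [IsFiniteMeasure ν] (f : 𝓢(V, E)) {h : α → V} (hh : AEStronglyMeasurable h ν) :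
    Integrable (fun s => f (h s)) ν :=
  .of_bound (f.continuous.comp_aestronglyMeasurable hh) _
    (.of_forall fun s => norm_le_seminorm ℝ f (h s))

theorem norm_exp_I_mul_ofReal_mul (t c : ℝ) : ‖cexp (I * t * c)‖ = 1 := by
  rw [mul_assoc, mul_comm, ← ofReal_mul, norm_exp_ofReal_mul_I]

theorem norm_cos_ofReal_mul_le_one (t x : ℝ) : ‖cos (t * x)‖ ≤ 1 := by
  rw [← ofReal_mul, ← ofReal_cos, norm_real, Real.norm_eq_abs]
  exact Real.abs_cos_le_one _

theorem exp_neg_I_mul_mul_cos (t lam r : ℝ) :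
    cexp (-(I * t * lam)) * cos (t * r) =
      (cexp (I * t * ↑(r - lam)) + cexp (I * t * ↑(-r - lam))) / 2 := by
  rw [Complex.cos, mul_div_assoc', mul_add, ← exp_add, ← exp_add]
  push_cast
  congr 3 <;> ring

theorem integral_comp_mul_mul_exp_I_mul (g : ℝ → ℂ) {ε : ℝ} (hε : ε ≠ 0) (c : ℝ) :
    ∫ t : ℝ, g (ε * t) * cexp (I * t * c) =
      |ε⁻¹| * ∫ t : ℝ, cexp (I * t * ↑(ε⁻¹ * c)) * g t := by
  have hε' : (ε : ℂ) ≠ 0 := ofReal_ne_zero.mpr hε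
  rw [← real_smul, ← Measure.integral_comp_mul_left]
  congr 1 with t
  rw [mul_comm]
  congr 2
  push_cast
  field_simp

theorem integral_comp_mul_mul_exp_neg_I_mul_mul_cos {g : ℝ → ℂ} (hg : Integrable g) {ε : ℝ}
    (hε : ε ≠ 0) (lam r : ℝ) :
    ∫ t : ℝ, g (ε * t) * cexp (-(I * t * lam)) * cos (t * r) =
      |ε⁻¹| / 2 * ((∫ t : ℝ, cexp (I * t * ↑(ε⁻¹ * (r - lam))) * g t) +
        ∫ t : ℝ, cexp (I * t * ↑(ε⁻¹ * (-r - lam))) * g t) := by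
  have hint (c : ℝ) : Integrable fun t => g (ε * t) * cexp (I * t * c) :=
    (hg.comp_mul_left' hε).mul_bdd (by fun_prop : Continuous _).aestronglyMeasurable
      (.of_forall fun t => (norm_exp_I_mul_ofReal_mul t c).le)
  calc ∫ t : ℝ, g (ε * t) * cexp (-(I * t * lam)) * cos (t * r)
      = ∫ t : ℝ, (g (ε * t) * cexp (I * t * ↑(r - lam)) +
          g (ε * t) * cexp (I * t * ↑(-r - lam))) / 2 := by
        congr 1 with t
        rw [mul_assoc, exp_neg_I_mul_mul_cos]
        ring
    _ = _ := by
        rw [integral_div, integral_add (hint _) (hint _), integral_comp_mul_mul_exp_I_mul g hε,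
          integral_comp_mul_mul_exp_I_mul g hε]
        ring

theorem integral_mul_integral_cos_mul_comm {α : Type*} [MeasurableSpace α] {ν : Measure α}
    [IsFiniteMeasure ν] {φ : ℝ → ℂ} (hφ : Integrable φ) {ψ : α → ℝ} (hψ : Measurable ψ) :
    ∫ t : ℝ, φ t * ∫ s, cos (t * ψ s) ∂ν = ∫ s, (∫ t : ℝ, φ t * cos (t * ψ s)) ∂ν := by
  have hint : Integrable (Function.uncurry fun t s => φ t * cos (t * ψ s)) (volume.prod ν) :=
    (hφ.comp_fst ν).mul_bdd
      (by fun_prop : Measurable fun p : ℝ × α => cos (p.1 * ψ p.2)).aestronglyMeasurable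
      (.of_forall fun p => norm_cos_ofReal_mul_le_one p.1 (ψ p.2))
  simp_rw [← integral_const_mul]
  exact integral_integral_swap hint

theorem smoothed_spectral_multiplier_identity_general
    (μ : Measure ℝ) [IsFiniteMeasure μ]
    (a : SchwartzMap ℝ ℂ) (fa : ℝ → ℂ)
    (hfa : ∀ t : ℝ, fa t = ∫ τ : ℝ, Complex.exp (-(Complex.I * t * τ)) * a τ)
    (ε : ℝ) (hε : 0 < ε) (lam : ℝ) :
    ∫ s in Set.Ici (0 : ℝ), a (ε⁻¹ * (Real.sqrt s - lam)) ∂μ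
      = (ε / Real.pi : ℂ) *
          (∫ t : ℝ, fa (ε * t) * Complex.exp (-(Complex.I * t * lam)) *
            (∫ s in Set.Ici (0 : ℝ), Complex.cos (t * Real.sqrt s) ∂μ))
        - ∫ s in Set.Ici (0 : ℝ), a (ε⁻¹ * (-Real.sqrt s - lam)) ∂μ := by
  have hfa_eq : fa = fun t => 𝓕 (a : ℝ → ℂ) (t / (2 * Real.pi)) :=
    funext fun t => (hfa t).trans (integral_exp_neg_I_mul_eq_fourier a t)
  have hfa_int : Integrable fa := hfa_eq ▸ (𝓕 a).integrable.comp_div Real.two_pi_pos.ne'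
  have hphase : Integrable fun t => fa (ε * t) * cexp (-(I * t * lam)) :=
    (hfa_int.comp_mul_left' hε.ne').mul_bdd (c := 1)
      (by fun_prop : Continuous _).aestronglyMeasurable
      (.of_forall fun t => by simp [norm_exp, mul_re])
  rw [integral_mul_integral_cos_mul_comm hphase Real.continuous_sqrt.measurable]
  simp_rw [integral_comp_mul_mul_exp_neg_I_mul_mul_cos hfa_int hε.ne', hfa_eq,
    SchwartzMap.integral_exp_I_mul_fourier_div, ← mul_add, integral_const_mul]
  rw [integral_add (a.integrable_comp (by fun_prop)) (a.integrable_comp (by fun_prop)),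
    abs_of_pos (inv_pos.2 hε)]
  have hε' : (ε : ℂ) ≠ 0 := ofReal_ne_zero.mpr hε.ne'
  push_cast
  field_simp
  ring

/-- Scalar version of the identity
`a(ε⁻¹(√(-Δ)-λ)) = (ε/π)∫ â(εt) e^{-itλ} cos(t√(-Δ)) dt − a(ε⁻¹(-√(-Δ)-λ))`
against a finite spectral measure `μ`, where `â t = ∫ e^{-itτ} a(τ) dτ` is supported in
`(-1,1)`. -/
theorem smoothed_spectral_multiplier_identity
    (μ : Measure ℝ) [IsFiniteMeasure μ]
    (a : SchwartzMap ℝ ℂ) (fa : ℝ → ℂ)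
    (hfa : ∀ t : ℝ, fa t = ∫ τ : ℝ, Complex.exp (-(Complex.I * t * τ)) * a τ)
    (hsupp : Function.support fa ⊆ Set.Ioo (-1 : ℝ) 1)
    (ε : ℝ) (hε : 0 < ε) (lam : ℝ) :
    ∫ s in Set.Ici (0 : ℝ), a (ε⁻¹ * (Real.sqrt s - lam)) ∂μ
      = (ε / Real.pi : ℂ) *
          (∫ t : ℝ, fa (ε * t) * Complex.exp (-(Complex.I * t * lam)) *
            (∫ s in Set.Ici (0 : ℝ), Complex.cos (t * Real.sqrt s) ∂μ))
        - ∫ s in Set.Ici (0 : ℝ), a (ε⁻¹ * (-Real.sqrt s - lam)) ∂μ :=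
  smoothed_spectral_multiplier_identity_general μ a fa hfa ε hε lam
end

section
/- Let m : [1,∞) → ℂ satisfy |d^j m/dr^j (r)| ≤ C_j r^(-j) for j = 0, 1 and let H ∈ 𝒮(ℝ). Then for λ ≥ 2 and any fixed ρ ∈ [1,2], |∫_1^∞ e^{irρ} r^((n-1)/2) H(λ - r) m(rρ) dr| ≤ C λ^((n-1)/2), with C independent of λ and ρ ∈ [1,2]. -/
/-!
The oscillating factor has modulus one, and on `r ≥ 0` Peetre's inequality
`r ^ α ≤ λ ^ α (1 + |λ - r|) ^ k` (for `0 ≤ α ≤ k`, `λ ≥ 1`) moves the growth of `r ^ α` onto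
`λ ^ α` at the price of a polynomial weight in `λ - r`, which the Schwartz function `H (λ - r)`
absorbs into an integral independent of `λ` and `ρ`.
-/

open MeasureTheory

namespace SchwartzMap

variable {D V : Type*} [NormedAddCommGroup D] [NormedSpace ℝ D] [MeasurableSpace D] [BorelSpace D]
  [SecondCountableTopology D] [NormedAddCommGroup V] [NormedSpace ℝ V]
  {μ : Measure D} [μ.HasTemperateGrowth]

theorem integrable_one_add_norm_pow_mul (f : 𝓢(D, V)) (k : ℕ) :
    Integrable (fun x ↦ (1 + ‖x‖) ^ k * ‖f x‖) μ := by
  have hexpand : (fun x ↦ (1 + ‖x‖) ^ k * ‖f x‖) =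
      fun x ↦ ∑ i ∈ Finset.range (k + 1), (k.choose i : ℝ) * (‖x‖ ^ i * ‖f x‖) := by
    ext x
    rw [add_comm, add_pow, Finset.sum_mul]
    refine Finset.sum_congr rfl fun i _ ↦ ?_
    ring
  rw [hexpand]
  exact integrable_finsetSum _ fun i _ ↦ (f.integrable_pow_mul μ i).const_mul _

end SchwartzMap

theorem Real.rpow_le_rpow_mul_one_add_abs_sub_pow {r lam α : ℝ} {k : ℕ} (hr : 0 ≤ r)
    (hlam : 1 ≤ lam) (hα : 0 ≤ α) (hαk : α ≤ k) :
    r ^ α ≤ lam ^ α * (1 + |lam - r|) ^ k := by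
  have hr_le : r ≤ lam * (1 + |lam - r|) := by
    rcases abs_cases (lam - r) with ⟨h, _⟩ | ⟨h, _⟩ <;> nlinarith
  calc r ^ α ≤ (lam * (1 + |lam - r|)) ^ α := Real.rpow_le_rpow hr hr_le hα
    _ = lam ^ α * (1 + |lam - r|) ^ α := Real.mul_rpow (by linarith) (by positivity)
    _ ≤ lam ^ α * (1 + |lam - r|) ^ (k : ℝ) := by
      gcongr
      · linarith [abs_nonneg (lam - r)]
    _ = lam ^ α * (1 + |lam - r|) ^ k := by rw [Real.rpow_natCast]

theorem norm_setIntegral_le_rpow_mul_integral_one_add_norm_pow_mul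
    {E V : Type*} [NormedAddCommGroup E] [NormedSpace ℝ E] [NormedAddCommGroup V]
    [NormedSpace ℝ V] (H : SchwartzMap ℝ V) {f : ℝ → E} {s : Set ℝ} (hs : MeasurableSet s)
    (hs₀ : s ⊆ Set.Ici 0) {C lam α : ℝ} {k : ℕ} (hC : 0 ≤ C) (hlam : 1 ≤ lam) (hα : 0 ≤ α)
    (hαk : α ≤ k) (hf : ∀ r ∈ s, ‖f r‖ ≤ C * r ^ α * ‖H (lam - r)‖) :
    ‖∫ r in s, f r‖ ≤ C * lam ^ α * ∫ x, (1 + ‖x‖) ^ k * ‖H x‖ := by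
  set g : ℝ → ℝ := fun r ↦ C * lam ^ α * ((1 + ‖lam - r‖) ^ k * ‖H (lam - r)‖)
  have hg : Integrable g :=
    ((H.integrable_one_add_norm_pow_mul (μ := volume) k).comp_sub_left lam).const_mul _
  have hf_le_g : ∀ r ∈ s, ‖f r‖ ≤ g r := fun r hr ↦ by
    have hpeetre := Real.rpow_le_rpow_mul_one_add_abs_sub_pow (hs₀ hr) hlam hα hαk
    calc ‖f r‖ ≤ C * r ^ α * ‖H (lam - r)‖ := hf r hr
      _ ≤ C * (lam ^ α * (1 + |lam - r|) ^ k) * ‖H (lam - r)‖ := by gcongr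
      _ = g r := by simp only [g, Real.norm_eq_abs]; ring
  calc ‖∫ r in s, f r‖ ≤ ∫ r in s, g r :=
        norm_integral_le_of_norm_le hg.restrict ((ae_restrict_iff' hs).mpr (.of_forall hf_le_g))
    _ ≤ ∫ r, g r := setIntegral_le_integral hg (.of_forall fun r ↦ by positivity)
    _ = C * lam ^ α * ∫ x, (1 + ‖x‖) ^ k * ‖H x‖ := by
      rw [integral_const_mul, integral_sub_left_eq_self (fun x ↦ (1 + ‖x‖) ^ k * ‖H x‖)]

theorem oscillatory_symbol_integral_bound_general
    (n : ℕ) (hn : 2 ≤ n) (m : ℝ → ℂ) (C₀ : ℝ)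
    (hm0 : ∀ r : ℝ, 1 ≤ r → ‖m r‖ ≤ C₀)
    (H : SchwartzMap ℝ ℝ) :
    ∃ C : ℝ, 0 < C ∧ ∀ lam : ℝ, 2 ≤ lam → ∀ ρ : ℝ, ρ ∈ Set.Icc (1 : ℝ) 2 →
      ‖∫ r in Set.Ioi (1 : ℝ),
          Complex.exp (Complex.I * r * ρ) * ((r ^ (((n : ℝ) - 1) / 2) : ℝ) : ℂ) *
            ((H (lam - r) : ℝ) : ℂ) * m (r * ρ)‖
        ≤ C * lam ^ (((n : ℝ) - 1) / 2) := by
  set α : ℝ := ((n : ℝ) - 1) / 2 with hα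
  have hn' : (2 : ℝ) ≤ n := by exact_mod_cast hn
  have hα₀ : 0 ≤ α := by linarith
  have hαn : α ≤ n := by linarith
  have hC₀ : 0 ≤ C₀ := (norm_nonneg _).trans (hm0 1 le_rfl)
  set A := ∫ x, (1 + ‖x‖) ^ n * ‖H x‖
  have hA : 0 ≤ A := integral_nonneg fun x ↦ by positivity
  refine ⟨C₀ * A + 1, by positivity, fun lam hlam ρ hρ ↦ ?_⟩
  have hpointwise : ∀ r ∈ Set.Ioi (1 : ℝ),
      ‖Complex.exp (Complex.I * r * ρ) * ((r ^ α : ℝ) : ℂ) * ((H (lam - r) : ℝ) : ℂ) *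
          m (r * ρ)‖ ≤ C₀ * r ^ α * ‖H (lam - r)‖ := fun r hr ↦ by
    have hr₁ : (1 : ℝ) ≤ r := le_of_lt hr
    have hm : ‖m (r * ρ)‖ ≤ C₀ := hm0 _ (one_le_mul_of_one_le_of_one_le hr₁ hρ.1)
    have hexp : ‖Complex.exp (Complex.I * r * ρ)‖ = 1 := by
      rw [show Complex.I * r * ρ = ((r * ρ : ℝ) : ℂ) * Complex.I by push_cast; ring]
      exact Complex.norm_exp_ofReal_mul_I _
    rw [norm_mul, norm_mul, norm_mul, hexp, one_mul, Complex.norm_real, Complex.norm_real,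
      Real.norm_of_nonneg (Real.rpow_nonneg (zero_le_one.trans hr₁) _), mul_comm C₀, mul_right_comm]
    gcongr
  have hlamα : 0 < lam ^ α := Real.rpow_pos_of_pos (by linarith) _
  calc _ ≤ C₀ * lam ^ α * A :=
        norm_setIntegral_le_rpow_mul_integral_one_add_norm_pow_mul H measurableSet_Ioi
          (Set.Ioi_subset_Ici zero_le_one) hC₀ (by linarith) hα₀ hαn hpointwise
    _ ≤ (C₀ * A + 1) * lam ^ α := by nlinarith

/-- If `m` satisfies symbol bounds `|m(r)| ≤ C₀`, `|m'(r)| ≤ C₁/r` for `r ≥ 1` and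
`H ∈ 𝒮(ℝ)`, then for `λ ≥ 2` and `ρ ∈ [1,2]`,
`|∫_1^∞ e^{irρ} r^((n-1)/2) H(λ-r) m(rρ) dr| ≤ C λ^((n-1)/2)`, uniformly in `ρ`. -/
theorem oscillatory_symbol_integral_bound
    (n : ℕ) (hn : 2 ≤ n) (m : ℝ → ℂ) (C₀ C₁ : ℝ)
    (hmdiff : ∀ r : ℝ, 1 ≤ r → DifferentiableAt ℝ m r)
    (hm0 : ∀ r : ℝ, 1 ≤ r → ‖m r‖ ≤ C₀)
    (hm1 : ∀ r : ℝ, 1 ≤ r → ‖deriv m r‖ ≤ C₁ / r)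
    (H : SchwartzMap ℝ ℝ) :
    ∃ C : ℝ, 0 < C ∧ ∀ lam : ℝ, 2 ≤ lam → ∀ ρ : ℝ, ρ ∈ Set.Icc (1 : ℝ) 2 →
      ‖∫ r in Set.Ioi (1 : ℝ),
          Complex.exp (Complex.I * r * ρ) * ((r ^ (((n : ℝ) - 1) / 2) : ℝ) : ℂ) *
            ((H (lam - r) : ℝ) : ℂ) * m (r * ρ)‖
        ≤ C * lam ^ (((n : ℝ) - 1) / 2) :=
  oscillatory_symbol_integral_bound_general n hn m C₀ hm0 H
end
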